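/- arXiv:2603.05211 — 2 statements merged into one kernel-verified Lean document; each statement's English description precedes it below -/
import Mathlib

section
/- For all θ ∈ ℝ, −∫₀^θ ln(2·cosh(ξ)) dξ = π²/24 + θ²/2 + (1/2)·Li₂(−e^{2θ}), where Li₂(x) = −∫₀^x ln(1−t)/t dt is the dilogarithm (for x ≤ 0 this integral is well defined). -/
open intervalIntegral

open Real MeasureTheory

/-- The real dilogarithm, `Li₂(x) = −∫₀^x ln(1−t)/t dt`. -/
noncomputable def Li2 (x : ℝ) : ℝ := -∫ t in (0 : ℝ)..x, Real.log (1 - t) / t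

lemma dilog_bound {t : ℝ} (ht : t ≤ 0) : |Real.log (1 - t) / t| ≤ 1 := by
  rcases eq_or_lt_of_le ht with rfl | ht
  · simp
  · have h1 : (0:ℝ) < 1 - t := by linarith
    have h2 : Real.log (1 - t) ≤ -t := by
      have := Real.log_le_sub_one_of_pos h1; linarith
    have h3 : 0 ≤ Real.log (1 - t) := Real.log_nonneg (by linarith)
    rw [abs_le]
    constructor
    · rw [le_div_iff_of_neg ht]; linarith
    · rw [div_le_iff_of_neg ht]; linarith

lemma dilog_meas : Measurable (fun t : ℝ => Real.log (1 - t) / t) :=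
  (Real.measurable_log.comp (measurable_const.sub measurable_id)).div measurable_id

lemma dilog_intInt {x : ℝ} (hx : x ≤ 0) :
    IntervalIntegrable (fun t : ℝ => Real.log (1 - t) / t) volume x 0 := by
  rw [intervalIntegrable_iff]
  apply Integrable.mono'
    (integrableOn_const (C := (1:ℝ)) (by rw [Set.uIoc]; exact measure_Ioc_lt_top.ne))
    dilog_meas.aestronglyMeasurable.restrict
  filter_upwards [ae_restrict_mem measurableSet_uIoc] with t ht
  have h0 : t ≤ 0 := ht.2.trans_eq (sup_eq_right.mpr hx)
  rw [Real.norm_eq_abs]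
  exact dilog_bound h0

lemma Li2_hasDerivAt {x : ℝ} (hx : x < 0) :
    HasDerivAt Li2 (-(Real.log (1 - x) / x)) x := by
  have hc : ContinuousAt (fun t : ℝ => Real.log (1 - t) / t) x := by
    apply ContinuousAt.div
    · exact (Real.continuousAt_log (by linarith)).comp
        (continuous_const.sub continuous_id).continuousAt
    · exact continuousAt_id
    · exact ne_of_lt hx
  have := intervalIntegral.integral_hasDerivAt_right
    (dilog_intInt hx.le).symm
    (dilog_meas.stronglyMeasurable.stronglyMeasurableAtFilter)
    hc
  exact this.neg

lemma hasSum_alt_zeta_two :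
    HasSum (fun n : ℕ => (-1 : ℝ) ^ n / (n : ℝ) ^ 2) (-(π ^ 2 / 12)) := by
  have hz := hasSum_zeta_two
  -- even part
  have he2 : HasSum (fun n : ℕ => (2 : ℝ) / ((2 * n : ℕ) : ℝ) ^ 2) (π ^ 2 / 12) := by
    have h := hz.div_const 2
    have h12 : π ^ 2 / 6 / 2 = π ^ 2 / 12 := by ring
    rw [h12] at h
    convert h using 2 with n
    · rfl
    rcases Nat.eq_zero_or_pos n with rfl | hn
    · simp
    · have : ((n : ℝ)) ≠ 0 := Nat.cast_ne_zero.mpr hn.ne'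
      push_cast
      field_simp
  have he : HasSum (fun n : ℕ => if Even n then (2 : ℝ) / (n : ℝ) ^ 2 else 0) (π ^ 2 / 12) := by
    rw [← Function.Injective.hasSum_iff (f := fun n : ℕ => if Even n then (2 : ℝ) / (n : ℝ) ^ 2 else 0)
        (mul_right_injective₀ (two_ne_zero (α := ℕ)))]
    · convert he2 using 2 with n
      simp [even_two_mul]
    · intro m hm
      have : ¬ Even m := by
        simp only [Set.mem_range, not_exists] at hm
        intro ⟨k, hk⟩
        exact hm k (by omega)
      simp [this]
  have hh := he.sub hz
  have : (fun n : ℕ => (if Even n then (2 : ℝ) / (n : ℝ) ^ 2 else 0) - 1 / (n : ℝ) ^ 2)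
      = fun n : ℕ => (-1 : ℝ) ^ n / (n : ℝ) ^ 2 := by
    funext n
    rcases Nat.even_or_odd n with h | h
    · simp [h, Even.neg_one_pow h]; ring
    · simp [Nat.not_even_iff_odd.mpr h, Odd.neg_one_pow h]; ring
  rw [this] at hh
  convert hh using 1
  · rfl
  ring

lemma hasSum_alt_zeta_two' :
    HasSum (fun n : ℕ => (-1 : ℝ) ^ (n + 1) / ((n : ℝ) + 1) ^ 2) (-(π ^ 2 / 12)) := by
  have hfe : (fun n : ℕ => (-1 : ℝ) ^ (n + 1) / ((n : ℝ) + 1) ^ 2)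
      = fun n : ℕ => (fun m : ℕ => (-1 : ℝ) ^ m / (m : ℝ) ^ 2) (n + 1) := by
    funext n; push_cast; ring
  rw [hfe]
  refine (hasSum_nat_add_iff (f := fun m : ℕ => (-1 : ℝ) ^ m / (m : ℝ) ^ 2) 1).mpr ?_
  simpa using hasSum_alt_zeta_two


lemma Li2_neg_one : Li2 (-1) = -(π ^ 2 / 12) := by
  have hle : (-1 : ℝ) ≤ 0 := by norm_num
  rw [Li2, intervalIntegral.integral_symm, neg_neg,
    intervalIntegral.integral_of_le hle]
  set μ := volume.restrict (Set.Ioc (-1 : ℝ) 0) with hμ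
  set F : ℕ → ℝ → ℝ := fun n t => -(t ^ n / ((n : ℝ) + 1)) with hF
  have h_int : ∀ n, Integrable (F n) μ := by
    intro n
    exact (((continuous_pow n).div_const _).neg).integrableOn_Ioc
  have h_norm : ∀ n, ∫ a, ‖F n a‖ ∂μ = 1 / ((n : ℝ) + 1) ^ 2 := by
    intro n
    have hc : ∀ t ∈ Set.Ioc (-1 : ℝ) 0, ‖F n t‖ = (-t) ^ n / ((n : ℝ) + 1) := by
      intro t ht
      have h1 : (0 : ℝ) < (n : ℝ) + 1 := by positivity
      rw [hF]
      simp only [Real.norm_eq_abs, abs_neg, abs_div, abs_pow,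
        abs_of_pos h1, abs_of_nonpos ht.2]
    rw [hμ, MeasureTheory.setIntegral_congr_fun measurableSet_Ioc hc,
      ← intervalIntegral.integral_of_le hle]
    have := intervalIntegral.integral_comp_neg (a := (-1 : ℝ)) (b := 0)
      (fun x : ℝ => x ^ n / ((n : ℝ) + 1))
    simp only [neg_zero, neg_neg] at this
    rw [this, intervalIntegral.integral_div, integral_pow]
    have h1 : ((n : ℝ) + 1) ≠ 0 := by positivity
    field_simp
    ring
  have h_sum : Summable fun n => ∫ a, ‖F n a‖ ∂μ := by
    simp_rw [h_norm]
    have h2 : Summable fun n : ℕ => 1 / (n : ℝ) ^ 2 :=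
      hasSum_zeta_two.summable
    have := (summable_nat_add_iff 1).mpr h2
    refine this.congr fun n => ?_
    push_cast
    ring
  have h_key := hasSum_integral_of_summable_integral_norm h_int h_sum
  have h_inner : ∫ a, (∑' n, F n a) ∂μ = ∫ a, Real.log (1 - a) / a ∂μ := by
    refine integral_congr_ae ?_
    have h0 : ∀ᵐ (t : ℝ) ∂volume, t ≠ 0 := by
      refine ae_iff.mpr ?_
      have : {a : ℝ | ¬a ≠ 0} = {(0 : ℝ)} := by ext t; simp
      rw [this]
      exact measure_singleton 0
    filter_upwards [ae_restrict_mem measurableSet_Ioc, ae_restrict_of_ae h0]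
      with t ht ht0
    have habs : |t| < 1 := abs_lt.mpr ⟨ht.1, lt_of_le_of_lt ht.2 one_pos⟩
    have hlog := hasSum_pow_div_log_of_abs_lt_one habs
    have h2 : HasSum (fun n : ℕ => F n t) (Real.log (1 - t) / t) := by
      have h3 := (hlog.div_const t).neg
      have h4 : -(-Real.log (1 - t) / t) = Real.log (1 - t) / t := by ring
      rw [h4] at h3
      refine h3.congr_fun fun n => ?_
      rw [hF]
      simp only
      rw [pow_succ]
      field_simp
    exact h2.tsum_eq
  have h_term : ∀ n, ∫ a, F n a ∂μ = (-1 : ℝ) ^ (n + 1) / ((n : ℝ) + 1) ^ 2 := by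
    intro n
    rw [hμ, ← intervalIntegral.integral_of_le hle, hF]
    simp only
    rw [intervalIntegral.integral_neg, intervalIntegral.integral_div, integral_pow]
    have h1 : ((n : ℝ) + 1) ≠ 0 := by positivity
    rw [zero_pow (Nat.succ_ne_zero n)]
    push_cast
    field_simp
    ring
  rw [h_inner] at h_key
  have h_key2 : HasSum (fun n : ℕ => (-1 : ℝ) ^ (n + 1) / ((n : ℝ) + 1) ^ 2)
      (∫ a, Real.log (1 - a) / a ∂μ) := by
    refine h_key.congr_fun fun n => (h_term n).symm
  exact (h_key2.unique hasSum_alt_zeta_two')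


theorem lobachevsky_dilog (θ : ℝ) :
    -∫ ξ in (0 : ℝ)..θ, Real.log (2 * Real.cosh ξ) =
      Real.pi ^ 2 / 24 + θ ^ 2 / 2 + (1 / 2) * Li2 (-Real.exp (2 * θ)) := by
  set L : ℝ → ℝ := fun y => -∫ ξ in (0 : ℝ)..y, Real.log (2 * Real.cosh ξ) with hL
  set R : ℝ → ℝ := fun y => π ^ 2 / 24 + y ^ 2 / 2 + (1 / 2) * Li2 (-Real.exp (2 * y)) with hR
  have hg : Continuous fun ξ : ℝ => Real.log (2 * Real.cosh ξ) := by
    apply (continuous_const.mul Real.continuous_cosh).log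
    intro x
    have := Real.cosh_pos x
    exact (mul_pos two_pos this).ne'
  have hderiv : ∀ x : ℝ, HasDerivAt (fun y => L y - R y) 0 x := by
    intro x
    have hcoshx : (0:ℝ) < Real.cosh x := Real.cosh_pos x
    have hLd : HasDerivAt L (-(Real.log (2 * Real.cosh x))) x := by
      refine HasDerivAt.neg ?_
      exact intervalIntegral.integral_hasDerivAt_right
        (hg.intervalIntegrable 0 x) (hg.stronglyMeasurableAtFilter _ _) hg.continuousAt
    have hex : (0:ℝ) < Real.exp (2 * x) := Real.exp_pos _
    have hr1 : HasDerivAt (fun y : ℝ => -Real.exp (2 * y)) (-(Real.exp (2 * x) * 2)) x := by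
      refine HasDerivAt.neg ?_
      have h2 : HasDerivAt (fun y : ℝ => 2 * y) 2 x := by
        simpa using (hasDerivAt_id x).const_mul 2
      exact (Real.hasDerivAt_exp (2 * x)).comp x h2
    have hLi := (Li2_hasDerivAt (neg_neg_iff_pos.mpr hex)).comp x hr1
    have hsq : HasDerivAt (fun y : ℝ => y ^ 2 / 2) x x := by
      have := (hasDerivAt_pow 2 x).div_const 2
      simpa using this
    have hRd : HasDerivAt R
        (0 + x + (1/2) * (-(Real.log (1 - -Real.exp (2*x)) / -Real.exp (2*x)) * -(Real.exp (2*x) * 2))) x := by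
      exact ((hasDerivAt_const x (π ^ 2 / 24)).add hsq).add (hLi.const_mul (1/2))
    have key : Real.log (2 * Real.cosh x) = -x + Real.log (1 + Real.exp (2 * x)) := by
      have h2c : 2 * Real.cosh x = Real.exp (-x) * (1 + Real.exp (2 * x)) := by
        rw [Real.cosh_eq]
        rw [mul_add, mul_one, ← Real.exp_add]
        ring_nf
      rw [h2c, Real.log_mul (Real.exp_ne_zero _) (by positivity), Real.log_exp]
    have htot := hLd.sub hRd
    have hval : -(Real.log (2 * Real.cosh x)) -
        (0 + x + (1/2) * (-(Real.log (1 - -Real.exp (2*x)) / -Real.exp (2*x)) * -(Real.exp (2*x) * 2))) = 0 := by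
      rw [key]
      have h1 : (1 : ℝ) - -Real.exp (2*x) = 1 + Real.exp (2*x) := by ring
      rw [h1]
      field_simp
      ring
    rwa [hval] at htot
  have hconst : ∀ y : ℝ, L y - R y = L 0 - R 0 := fun y =>
    is_const_of_deriv_eq_zero (fun x => (hderiv x).differentiableAt)
      (fun x => (hderiv x).deriv) y 0
  have hL0 : L 0 = 0 := by simp [hL]
  have hR0 : R 0 = 0 := by
    rw [hR]
    simp only [mul_zero, Real.exp_zero, Li2_neg_one]
    ring
  have := hconst θ
  rw [hL0, hR0] at this
  have : L θ = R θ := by linarith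
  exact this
end

section
/- Let L₁, L₂, L₃ > 0 and define l₁ by cosh l₁ = (cosh L₁ + cosh L₂·cosh L₃)/(sinh L₂·sinh L₃) (the hyperbolic law of cosines for a right-angled hexagon, so cosh l₁ > 1). Then (cosh l₁ − 1)/(cosh l₁ + 1) = (cosh((L₁+L₂−L₃)/2)·cosh((L₁+L₃−L₂)/2)) / (cosh((L₁+L₂+L₃)/2)·cosh((L₂+L₃−L₁)/2)). -/
lemma cosh_sum_to_prod (a b : ℝ) :
    Real.cosh a + Real.cosh b = 2 * Real.cosh ((a + b) / 2) * Real.cosh ((a - b) / 2) := by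
  rw [Real.cosh_eq, Real.cosh_eq, Real.cosh_eq, Real.cosh_eq,
      show Real.exp a = Real.exp ((a+b)/2) * Real.exp ((a-b)/2) by
        rw [← Real.exp_add]; congr 1; ring,
      show Real.exp (-a) = Real.exp (-((a+b)/2)) * Real.exp (-((a-b)/2)) by
        rw [← Real.exp_add]; congr 1; ring,
      show Real.exp b = Real.exp ((a+b)/2) * Real.exp (-((a-b)/2)) by
        rw [← Real.exp_add]; congr 1; ring,
      show Real.exp (-b) = Real.exp (-((a+b)/2)) * Real.exp ((a-b)/2) by
        rw [← Real.exp_add]; congr 1; ring]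
  have := Real.exp_ne_zero ((a+b)/2)
  have := Real.exp_ne_zero ((a-b)/2)
  rw [Real.exp_neg, Real.exp_neg]
  field_simp
  ring

theorem hexagon_edge_product_formula (L1 L2 L3 l1 : ℝ)
    (hL1 : 0 < L1) (hL2 : 0 < L2) (hL3 : 0 < L3)
    (hl1 : Real.cosh l1 =
      (Real.cosh L1 + Real.cosh L2 * Real.cosh L3) / (Real.sinh L2 * Real.sinh L3)) :
    (Real.cosh l1 - 1) / (Real.cosh l1 + 1) =
      (Real.cosh ((L1 + L2 - L3) / 2) * Real.cosh ((L1 + L3 - L2) / 2)) /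
        (Real.cosh ((L1 + L2 + L3) / 2) * Real.cosh ((L2 + L3 - L1) / 2)) := by
  have hs2 : 0 < Real.sinh L2 := Real.sinh_pos_iff.mpr hL2
  have hs3 : 0 < Real.sinh L3 := Real.sinh_pos_iff.mpr hL3
  have hs : (0:ℝ) < Real.sinh L2 * Real.sinh L3 := mul_pos hs2 hs3
  have h1 : Real.cosh l1 - 1
      = (Real.cosh L1 + Real.cosh (L2 - L3)) / (Real.sinh L2 * Real.sinh L3) := by
    rw [hl1, Real.cosh_sub]
    field_simp
    ring
  have h2 : Real.cosh l1 + 1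
      = (Real.cosh L1 + Real.cosh (L2 + L3)) / (Real.sinh L2 * Real.sinh L3) := by
    rw [hl1, Real.cosh_add]
    field_simp
    ring
  have hnum : Real.cosh L1 + Real.cosh (L2 - L3)
      = 2 * Real.cosh ((L1 + L2 - L3) / 2) * Real.cosh ((L1 + L3 - L2) / 2) := by
    rw [cosh_sum_to_prod L1 (L2 - L3),
        show (L1 - (L2 - L3)) / 2 = (L1 + L3 - L2) / 2 by ring,
        show (L1 + (L2 - L3)) / 2 = (L1 + L2 - L3) / 2 by ring]
  have hden : Real.cosh L1 + Real.cosh (L2 + L3)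
      = 2 * Real.cosh ((L1 + L2 + L3) / 2) * Real.cosh ((L2 + L3 - L1) / 2) := by
    rw [cosh_sum_to_prod L1 (L2 + L3),
        show (L1 - (L2 + L3)) / 2 = -((L2 + L3 - L1) / 2) by ring,
        show (L1 + (L2 + L3)) / 2 = (L1 + L2 + L3) / 2 by ring,
        Real.cosh_neg]
  have hB : (0:ℝ) < Real.cosh L1 + Real.cosh (L2 + L3) :=
    add_pos (Real.cosh_pos _) (Real.cosh_pos _)
  rw [h1, h2]
  rw [show (Real.cosh L1 + Real.cosh (L2 - L3)) / (Real.sinh L2 * Real.sinh L3) /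
      ((Real.cosh L1 + Real.cosh (L2 + L3)) / (Real.sinh L2 * Real.sinh L3))
      = (Real.cosh L1 + Real.cosh (L2 - L3)) / (Real.cosh L1 + Real.cosh (L2 + L3)) by
    rw [div_div_div_cancel_right₀]
    exact (ne_of_gt hs)]
  rw [hnum, hden, div_eq_div_iff (by positivity) (by positivity)]
  ring
end
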